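/- Let κ be an infinite cardinal and X a T1 topological space. The Wallman κ-bounded extension W_κ̄X is Hausdorff if and only if X is κ̄-normal. -/

import Mathlib

universe u

open Cardinal Set Topology

/-- `X` is `𝓕`-regular: any `F ∈ 𝓕` and point `x ∉ F` can be separated by disjoint open sets. -/
def FRegular (X : Type u) [TopologicalSpace X] (F : Set (Set X)) : Prop :=
  ∀ A ∈ F, ∀ x : X, x ∉ A → ∃ U V : Set X,
    IsOpen U ∧ IsOpen V ∧ A ⊆ U ∧ x ∈ V ∧ Disjoint U V

/-- `X` is strongly `𝓕`-regular: any `F ∈ 𝓕` and point `x ∉ F` can be separated by open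
sets with disjoint closures. -/
def StronglyFRegular (X : Type u) [TopologicalSpace X] (F : Set (Set X)) : Prop :=
  ∀ A ∈ F, ∀ x : X, x ∉ A → ∃ U V : Set X,
    IsOpen U ∧ IsOpen V ∧ A ⊆ U ∧ x ∈ V ∧ closure U ∩ closure V = ∅

/-- `X` is `𝓕`-normal: any two disjoint members of `𝓕` can be separated by disjoint open sets. -/
def FNormal (X : Type u) [TopologicalSpace X] (F : Set (Set X)) : Prop :=
  ∀ A ∈ F, ∀ B ∈ F, Disjoint A B → ∃ U V : Set X,
    IsOpen U ∧ IsOpen V ∧ A ⊆ U ∧ B ⊆ V ∧ Disjoint U V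

/-- `X` is strongly `𝓕`-normal: any two disjoint members of `𝓕` can be separated by
open sets with disjoint closures. -/
def StronglyFNormal (X : Type u) [TopologicalSpace X] (F : Set (Set X)) : Prop :=
  ∀ A ∈ F, ∀ B ∈ F, Disjoint A B → ∃ U V : Set X,
    IsOpen U ∧ IsOpen V ∧ A ⊆ U ∧ B ⊆ V ∧ closure U ∩ closure V = ∅

/-- `X` is totally `𝓕`-normal: any member of `𝓕` and any closed set disjoint from it can be
separated by disjoint open sets. -/
def TotallyFNormal (X : Type u) [TopologicalSpace X] (F : Set (Set X)) : Prop :=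
  ∀ A ∈ F, ∀ B : Set X, IsClosed B → Disjoint A B → ∃ U V : Set X,
    IsOpen U ∧ IsOpen V ∧ A ⊆ U ∧ B ⊆ V ∧ Disjoint U V

/-- The family `𝓕_κ(X)` of all closed subsets of `X` contained in the closure of some subset
of `X` of cardinality at most `κ`. -/
def FamilyKappa (κ : Cardinal.{u}) (X : Type u) [TopologicalSpace X] : Set (Set X) :=
  {F | IsClosed F ∧ ∃ C : Set X, #C ≤ κ ∧ F ⊆ closure C}

/-- A closed ultrafilter on a topological space `X`: a family of closed sets not containing `∅`,
closed under binary intersections, and containing every closed set that meets all its members. -/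
structure ClosedUltrafilter (X : Type u) [TopologicalSpace X] : Type u where
  sets : Set (Set X)
  isClosed_of_mem : ∀ F ∈ sets, IsClosed F
  empty_not_mem : ∅ ∉ sets
  inter_mem : ∀ A ∈ sets, ∀ B ∈ sets, A ∩ B ∈ sets
  mem_of_forall_inter : ∀ F : Set X, IsClosed F → (∀ A ∈ sets, (F ∩ A).Nonempty) → F ∈ sets

/-- The topology of the Wallman extension `wX`, generated by the sets
`⟨U⟩ = {𝓕 ∈ wX : ∃ F ∈ 𝓕, F ⊆ U}` for `U` open in `X`. -/
instance ClosedUltrafilter.instTopologicalSpace (X : Type u) [TopologicalSpace X] :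
    TopologicalSpace (ClosedUltrafilter X) :=
  TopologicalSpace.generateFrom
    {S | ∃ U : Set X, IsOpen U ∧ S = {u : ClosedUltrafilter X | ∃ F ∈ u.sets, F ⊆ U}}

/-- The canonical map `j_X : X → wX` sending a point `x` to the principal closed ultrafilter
of all closed sets containing `x`. -/
def wallmanMap (X : Type u) [TopologicalSpace X] [T1Space X] (x : X) : ClosedUltrafilter X where
  sets := {F | IsClosed F ∧ x ∈ F}
  isClosed_of_mem := fun _ hF => hF.1
  empty_not_mem := fun h => h.2
  inter_mem := fun A hA B hB => ⟨hA.1.inter hB.1, hA.2, hB.2⟩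
  mem_of_forall_inter := fun F hF h => by
    obtain ⟨y, hyF, hyx⟩ := h {x} ⟨isClosed_singleton, rfl⟩
    exact ⟨hF, hyx ▸ hyF⟩

/-- The Wallman `κ`-bounded extension `W_κ̄X ⊆ wX`: the union of the closures (in `wX`) of the
images `j_X(C)` of subsets `C ⊆ X` of cardinality at most `κ`. -/
def WallmanKappa (κ : Cardinal.{u}) (X : Type u) [TopologicalSpace X] [T1Space X] :
    Set (ClosedUltrafilter X) :=
  ⋃ C ∈ {C : Set X | #C ≤ κ}, closure (wallmanMap X '' C)


namespace ClosedUltrafilter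

variable {X : Type u} [TopologicalSpace X]

theorem sets_nonempty {u : ClosedUltrafilter X} {A : Set X} (h : A ∈ u.sets) : A.Nonempty := by
  by_contra h'
  rw [Set.not_nonempty_iff_eq_empty] at h'
  exact u.empty_not_mem (h' ▸ h)

theorem univ_mem (u : ClosedUltrafilter X) : Set.univ ∈ u.sets :=
  u.mem_of_forall_inter _ isClosed_univ fun A hA => by
    simpa using sets_nonempty hA

theorem mem_of_superset' {u : ClosedUltrafilter X} {A B : Set X} (h : A ∈ u.sets)
    (hB : IsClosed B) (hAB : A ⊆ B) : B ∈ u.sets :=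
  u.mem_of_forall_inter B hB fun C hC =>
    (sets_nonempty (u.inter_mem A h C hC)).mono (Set.inter_subset_inter_left _ hAB)

theorem eq_of_sets {u v : ClosedUltrafilter X} (h : u.sets = v.sets) : u = v := by
  cases u; cases v
  simp only [mk.injEq]
  exact h

/-- The basic open set `⟨U⟩` of the Wallman extension. -/
def basic (U : Set X) : Set (ClosedUltrafilter X) := {u | ∃ F ∈ u.sets, F ⊆ U}

theorem isOpen_basic {U : Set X} (hU : IsOpen U) : IsOpen (basic U) :=
  TopologicalSpace.GenerateOpen.basic _ ⟨U, hU, rfl⟩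

theorem compl_basic {U : Set X} (hU : IsOpen U) :
    (basic U)ᶜ = {u : ClosedUltrafilter X | Uᶜ ∈ u.sets} := by
  ext u
  simp only [Set.mem_compl_iff, basic, Set.mem_setOf_eq]
  constructor
  · intro h
    push_neg at h
    refine u.mem_of_forall_inter _ hU.isClosed_compl fun A hA => ?_
    by_contra h2
    rw [Set.not_nonempty_iff_eq_empty] at h2
    refine h A hA fun x hx => ?_
    by_contra hxU
    exact absurd h2 (Set.nonempty_iff_ne_empty.mp ⟨x, hxU, hx⟩)
  · rintro hUc ⟨F, hF, hFU⟩
    have hmem := u.inter_mem F hF _ hUc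
    have he : F ∩ Uᶜ = ∅ :=
      Set.eq_empty_iff_forall_notMem.2 fun x hx => hx.2 (hFU hx.1)
    exact u.empty_not_mem (he ▸ hmem)

theorem isBasis :
    TopologicalSpace.IsTopologicalBasis
      {S : Set (ClosedUltrafilter X) | ∃ U : Set X, IsOpen U ∧ S = basic U} where
  exists_subset_inter := by
    rintro t₁ ⟨U, hU, rfl⟩ t₂ ⟨V, hV, rfl⟩ u ⟨⟨F, hF, hFU⟩, ⟨G, hG, hGV⟩⟩
    refine ⟨basic (U ∩ V), ⟨U ∩ V, hU.inter hV, rfl⟩,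
      ⟨F ∩ G, u.inter_mem F hF G hG, Set.inter_subset_inter hFU hGV⟩, ?_⟩
    rintro w ⟨H, hH, hHUV⟩
    exact ⟨⟨H, hH, hHUV.trans Set.inter_subset_left⟩,
      ⟨H, hH, hHUV.trans Set.inter_subset_right⟩⟩
  sUnion_eq := by
    apply Set.eq_univ_of_forall
    intro u
    exact ⟨basic Set.univ, ⟨Set.univ, isOpen_univ, rfl⟩,
      ⟨Set.univ, u.univ_mem, le_rfl⟩⟩
  eq_generateFrom := rfl

theorem wallmanMap_mem_basic [T1Space X] {x : X} {U : Set X} :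
    wallmanMap X x ∈ basic U ↔ x ∈ U := by
  constructor
  · rintro ⟨F, ⟨hFc, hxF⟩, hFU⟩
    exact hFU hxF
  · intro hx
    exact ⟨{x}, ⟨isClosed_singleton, rfl⟩, Set.singleton_subset_iff.2 hx⟩

theorem continuous_wallmanMap [T1Space X] : Continuous (wallmanMap X) := by
  rw [isBasis.continuous_iff]
  rintro s ⟨U, hU, rfl⟩
  have : wallmanMap X ⁻¹' basic U = U := Set.ext fun x => wallmanMap_mem_basic
  rw [this]
  exact hU

theorem mem_closure_image_iff [T1Space X] {u : ClosedUltrafilter X} {C : Set X} :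
    u ∈ closure (wallmanMap X '' C) ↔ closure C ∈ u.sets := by
  rw [isBasis.mem_closure_iff]
  constructor
  · intro h
    refine u.mem_of_forall_inter _ isClosed_closure fun A hA => ?_
    by_contra h2
    have hA' : A ⊆ (closure C)ᶜ := fun x hx hxc => h2 ⟨x, hxc, hx⟩
    obtain ⟨w, hwb, ⟨x, hxC, rfl⟩⟩ :=
      h (basic (closure C)ᶜ) ⟨_, isClosed_closure.isOpen_compl, rfl⟩ ⟨A, hA, hA'⟩
    exact (wallmanMap_mem_basic.1 hwb) (subset_closure hxC)
  · rintro hclC t ⟨U, hU, rfl⟩ ⟨F, hF, hFU⟩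
    obtain ⟨y, hyF, hyc⟩ := sets_nonempty (u.inter_mem F hF _ hclC)
    obtain ⟨x, hxU, hxC⟩ := mem_closure_iff.1 hyc U hU (hFU hyF)
    exact ⟨wallmanMap X x, wallmanMap_mem_basic.2 hxU, Set.mem_image_of_mem _ hxC⟩

theorem mem_wallmanKappa_iff [T1Space X] {κ : Cardinal.{u}} {u : ClosedUltrafilter X} :
    u ∈ WallmanKappa κ X ↔ ∃ C : Set X, #C ≤ κ ∧ closure C ∈ u.sets := by
  simp only [WallmanKappa, Set.mem_iUnion, Set.mem_setOf_eq, mem_closure_image_iff,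
    exists_prop]

theorem wallmanMap_mem_wallmanKappa [T1Space X] {κ : Cardinal.{u}} (hκ : ℵ₀ ≤ κ) (x : X) :
    wallmanMap X x ∈ WallmanKappa κ X := by
  rw [mem_wallmanKappa_iff]
  refine ⟨{x}, ?_, isClosed_closure, subset_closure rfl⟩
  rw [Cardinal.mk_singleton]
  exact le_trans Cardinal.one_le_aleph0 hκ

theorem isCompact_setOf_mem {G : Set X} (hG : IsClosed G) :
    IsCompact {u : ClosedUltrafilter X | G ∈ u.sets} := by
  rw [isCompact_iff_ultrafilter_le_nhds]
  intro f hf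
  rw [Filter.le_principal_iff] at hf
  set S : Set (Set (Set X)) :=
    {T | (∀ F ∈ T, IsClosed F) ∧ ∅ ∉ T ∧ (∀ A ∈ T, ∀ B ∈ T, A ∩ B ∈ T)} with hS
  set S₀ : Set (Set X) :=
    {F | IsClosed F ∧ {u : ClosedUltrafilter X | F ∈ u.sets} ∈ f} with hS₀def
  have hS₀S : S₀ ∈ S := by
    refine ⟨fun F hF => hF.1, fun h => ?_, fun A hA B hB => ?_⟩
    · have hmem := h.2
      have he : {u : ClosedUltrafilter X | (∅ : Set X) ∈ u.sets} =
          (∅ : Set (ClosedUltrafilter X)) :=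
        Set.eq_empty_iff_forall_notMem.2 fun u hu => u.empty_not_mem hu
      rw [he] at hmem
      exact Filter.empty_notMem (f : Filter (ClosedUltrafilter X)) hmem
    · refine ⟨hA.1.inter hB.1, ?_⟩
      exact Filter.mem_of_superset (Filter.inter_mem hA.2 hB.2)
        fun u hu => u.inter_mem _ hu.1 _ hu.2
  have hchains : ∀ c ⊆ S, IsChain (· ⊆ ·) c → c.Nonempty →
      ∃ ub ∈ S, ∀ s ∈ c, s ⊆ ub := by
    intro c hcS hchain hcne
    refine ⟨⋃₀ c, ⟨?_, ?_, ?_⟩, fun s hs => Set.subset_sUnion_of_mem hs⟩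
    · rintro F ⟨T, hT, hFT⟩
      exact (hcS hT).1 F hFT
    · rintro ⟨T, hT, hFT⟩
      exact (hcS hT).2.1 hFT
    · rintro A ⟨T₁, hT₁, hA⟩ B ⟨T₂, hT₂, hB⟩
      rcases hchain.total hT₁ hT₂ with h | h
      · exact ⟨T₂, hT₂, (hcS hT₂).2.2 A (h hA) B hB⟩
      · exact ⟨T₁, hT₁, (hcS hT₁).2.2 A hA B (h hB)⟩
  obtain ⟨m, hS₀m, hmS, hmax⟩ := zorn_subset_nonempty S hchains S₀ hS₀S
  have hunivm : Set.univ ∈ m := hS₀m ⟨isClosed_univ, by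
    have : {u : ClosedUltrafilter X | Set.univ ∈ u.sets} =
        (Set.univ : Set (ClosedUltrafilter X)) :=
      Set.eq_univ_of_forall fun u => u.univ_mem
    rw [this]
    exact Filter.univ_mem⟩
  have hmax' : ∀ F : Set X, IsClosed F → (∀ A ∈ m, (F ∩ A).Nonempty) → F ∈ m := by
    intro F hFc hFA
    have hm' : m ∪ {G | ∃ A ∈ m, G = F ∩ A} ∈ S := by
      refine ⟨?_, ?_, ?_⟩
      · rintro G (hGm | ⟨A, hA, rfl⟩)
        · exact hmS.1 G hGm
        · exact hFc.inter (hmS.1 A hA)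
      · rintro (h | ⟨A, hA, hFA'⟩)
        · exact hmS.2.1 h
        · obtain ⟨x, hx⟩ := hFA A hA
          rw [← hFA'] at hx
          exact hx
      · have key : ∀ P Q : Set X, P ∩ (F ∩ Q) = F ∩ (P ∩ Q) := by
          intro P Q; ext x; simp only [Set.mem_inter_iff]; tauto
        rintro A (hA | ⟨A', hA', rfl⟩) B (hB | ⟨B', hB', rfl⟩)
        · exact Or.inl (hmS.2.2 A hA B hB)
        · exact Or.inr ⟨A ∩ B', hmS.2.2 A hA B' hB', (key A B').symm ▸ rfl⟩
        · refine Or.inr ⟨A' ∩ B, hmS.2.2 A' hA' B hB, ?_⟩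
          ext x; simp only [Set.mem_inter_iff]; tauto
        · refine Or.inr ⟨A' ∩ B', hmS.2.2 A' hA' B' hB', ?_⟩
          ext x; simp only [Set.mem_inter_iff]; tauto
    have heq := hmax hm' Set.subset_union_left
    have hFm : F ∩ Set.univ ∈ m := heq (Or.inr ⟨Set.univ, hunivm, rfl⟩)
    rwa [Set.inter_univ] at hFm
  set v : ClosedUltrafilter X :=
    ⟨m, hmS.1, hmS.2.1, hmS.2.2, hmax'⟩ with hvdef
  refine ⟨v, hS₀m ⟨hG, hf⟩, ?_⟩
  rw [isBasis.nhds_hasBasis.ge_iff]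
  rintro t ⟨⟨U, hU, rfl⟩, ⟨F, hF, hFU⟩⟩
  by_contra hbU
  have hbU2 : (basic U)ᶜ ∈ f := Ultrafilter.compl_mem_iff_notMem.2 (by exact hbU)
  rw [compl_basic hU] at hbU2
  have hUc : Uᶜ ∈ m := hS₀m ⟨hU.isClosed_compl, hbU2⟩
  have hmem : F ∩ Uᶜ ∈ m := hmS.2.2 F hF _ hUc
  have he : F ∩ Uᶜ = ∅ :=
    Set.eq_empty_iff_forall_notMem.2 fun x hx => hx.2 (hFU hx.1)
  exact hmS.2.1 (he ▸ hmem)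

theorem sep_aux [T1Space X] {κ : Cardinal.{u}} (hN : FNormal X (FamilyKappa κ X))
    {u v : ClosedUltrafilter X} (hu : u ∈ WallmanKappa κ X) (hv : v ∈ WallmanKappa κ X)
    {F : Set X} (hFu : F ∈ u.sets) (hFv : F ∉ v.sets) :
    ∃ U V : Set X, IsOpen U ∧ IsOpen V ∧ u ∈ basic U ∧ v ∈ basic V ∧
      Disjoint (basic U) (basic V) := by
  obtain ⟨CU, hCU, hclU⟩ := mem_wallmanKappa_iff.1 hu
  obtain ⟨CV, hCV, hclV⟩ := mem_wallmanKappa_iff.1 hv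
  have hFc : IsClosed F := u.isClosed_of_mem F hFu
  have hex : ¬ ∀ A ∈ v.sets, (F ∩ A).Nonempty :=
    fun h => hFv (v.mem_of_forall_inter F hFc h)
  push_neg at hex
  obtain ⟨B, hBv, hFB⟩ := hex
  have hA'u : F ∩ closure CU ∈ u.sets := u.inter_mem F hFu _ hclU
  have hB'v : B ∩ closure CV ∈ v.sets := v.inter_mem B hBv _ hclV
  have hA'F : F ∩ closure CU ∈ FamilyKappa κ X :=
    ⟨hFc.inter isClosed_closure, CU, hCU, Set.inter_subset_right⟩
  have hB'F : B ∩ closure CV ∈ FamilyKappa κ X :=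
    ⟨(v.isClosed_of_mem B hBv).inter isClosed_closure, CV, hCV, Set.inter_subset_right⟩
  have hd : Disjoint (F ∩ closure CU) (B ∩ closure CV) :=
    Set.disjoint_left.2 fun x hx hx' => by
      have hxm : x ∈ F ∩ B := ⟨hx.1, hx'.1⟩
      rw [hFB] at hxm
      exact hxm
  obtain ⟨U, V, hU, hV, hAU, hBV, hUV⟩ := hN _ hA'F _ hB'F hd
  refine ⟨U, V, hU, hV, ⟨_, hA'u, hAU⟩, ⟨_, hB'v, hBV⟩, ?_⟩
  rw [Set.disjoint_left]
  rintro w ⟨F₁, hF₁, hF₁U⟩ ⟨F₂, hF₂, hF₂V⟩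
  obtain ⟨x, hx1, hx2⟩ := sets_nonempty (w.inter_mem F₁ hF₁ F₂ hF₂)
  exact Set.disjoint_left.1 hUV (hF₁U hx1) (hF₂V hx2)

end ClosedUltrafilter

open ClosedUltrafilter in
/-- For an infinite cardinal `κ` and a `T₁`-space `X`, the Wallman `κ`-bounded extension
`W_κ̄X` is Hausdorff if and only if `X` is `κ̄`-normal. -/
theorem t2_wallmanKappa_iff_fNormal {X : Type u} [TopologicalSpace X] [T1Space X]
    (κ : Cardinal.{u}) (hκ : ℵ₀ ≤ κ) :
    T2Space (WallmanKappa κ X) ↔ FNormal X (FamilyKappa κ X) := by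
  constructor
  · -- Hausdorff implies κ̄-normal
    intro h2 A hA B hB hAB
    obtain ⟨hAc, CA, hCA, hAsub⟩ := hA
    obtain ⟨hBc, CB, hCB, hBsub⟩ := hB
    have hjW : ∀ x : X, wallmanMap X x ∈ WallmanKappa κ X :=
      wallmanMap_mem_wallmanKappa hκ
    set jW : X → WallmanKappa κ X := fun x => ⟨wallmanMap X x, hjW x⟩ with hjWdef
    have hjWc : Continuous jW := continuous_wallmanMap.subtype_mk _
    set KA : Set (ClosedUltrafilter X) := {u | A ∈ u.sets} with hKAdef
    set KB : Set (ClosedUltrafilter X) := {u | B ∈ u.sets} with hKBdef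
    have hKAW : KA ⊆ WallmanKappa κ X := fun u hu =>
      mem_wallmanKappa_iff.2 ⟨CA, hCA, mem_of_superset' hu isClosed_closure hAsub⟩
    have hKBW : KB ⊆ WallmanKappa κ X := fun u hu =>
      mem_wallmanKappa_iff.2 ⟨CB, hCB, mem_of_superset' hu isClosed_closure hBsub⟩
    have hKA : IsCompact (Subtype.val ⁻¹' KA : Set (WallmanKappa κ X)) := by
      rw [Subtype.isCompact_iff, Subtype.image_preimage_coe,
        Set.inter_eq_self_of_subset_right hKAW]
      exact isCompact_setOf_mem hAc
    have hKB : IsCompact (Subtype.val ⁻¹' KB : Set (WallmanKappa κ X)) := by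
      rw [Subtype.isCompact_iff, Subtype.image_preimage_coe,
        Set.inter_eq_self_of_subset_right hKBW]
      exact isCompact_setOf_mem hBc
    have hdisj : Disjoint KA KB := by
      rw [Set.disjoint_left]
      intro u huA huB
      have hmem := u.inter_mem A huA B huB
      rw [hAB.inter_eq] at hmem
      exact u.empty_not_mem hmem
    obtain ⟨O₁, O₂, hO₁, hO₂, hsub1, hsub2, hOdisj⟩ :=
      SeparatedNhds.of_isCompact_isCompact hKA hKB (hdisj.preimage _)
    refine ⟨jW ⁻¹' O₁, jW ⁻¹' O₂, hO₁.preimage hjWc, hO₂.preimage hjWc, ?_, ?_,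
      hOdisj.preimage _⟩
    · intro a ha
      exact hsub1 (show A ∈ (wallmanMap X a).sets from ⟨hAc, ha⟩)
    · intro b hb
      exact hsub2 (show B ∈ (wallmanMap X b).sets from ⟨hBc, hb⟩)
  · -- κ̄-normal implies Hausdorff
    intro hN
    constructor
    intro p q hpq
    have hsets : p.1.sets ≠ q.1.sets := fun h => hpq (Subtype.ext (eq_of_sets h))
    have hex : ∃ F, (F ∈ p.1.sets ∧ F ∉ q.1.sets) ∨ (F ∈ q.1.sets ∧ F ∉ p.1.sets) := by
      by_contra h
      push_neg at h
      exact hsets (Set.ext fun F => ⟨(h F).1, (h F).2⟩)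
    obtain ⟨F, ⟨h1, hh2⟩ | ⟨h1, hh2⟩⟩ := hex
    · obtain ⟨U, V, hU, hV, hpU, hqV, hdisj⟩ := sep_aux hN p.2 q.2 h1 hh2
      exact ⟨Subtype.val ⁻¹' basic U, Subtype.val ⁻¹' basic V,
        (isOpen_basic hU).preimage continuous_subtype_val,
        (isOpen_basic hV).preimage continuous_subtype_val, hpU, hqV, hdisj.preimage _⟩
    · obtain ⟨U, V, hU, hV, hqU, hpV, hdisj⟩ := sep_aux hN q.2 p.2 h1 hh2
      exact ⟨Subtype.val ⁻¹' basic V, Subtype.val ⁻¹' basic U,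
        (isOpen_basic hV).preimage continuous_subtype_val,
        (isOpen_basic hU).preimage continuous_subtype_val, hpV, hqU,
        hdisj.symm.preimage _⟩
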